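/- Let N ≥ 2 be an integer, let arccot denote the inverse cotangent with range (0, π), and suppose α ∈ ℝ satisfies (1/2)·arccot( (−N−2)/(2√(N−1)) ) ≤ α < π/2. Let v = (sin α, cos α) ∈ ℂ². Then for every φ ∈ [−π, π], the one-step target probability satisfies |(A(φ)·v)₀|² ≤ |(A(0)·v)₀|²; that is, the phase change φ = 0 (no rotation) is optimal in the region R₃. -/

import Mathlib

open Real Complex Matrix

/-- The generalized Grover iteration matrix with phase `φ` for a database of size `N`. -/
noncomputable def groverA (N : ℕ) (φ : ℝ) : Matrix (Fin 2) (Fin 2) ℂ :=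
  !![Complex.exp (φ * Complex.I) * ((1 - Complex.exp (φ * Complex.I)) / (N : ℂ) - 1),
     ((Real.sqrt ((N : ℝ) - 1) : ℂ) / (N : ℂ)) * (1 - Complex.exp (φ * Complex.I));
     ((Real.sqrt ((N : ℝ) - 1) : ℂ) / (N : ℂ)) * Complex.exp (φ * Complex.I) *
       (1 - Complex.exp (φ * Complex.I)),
     -(1 / (N : ℂ) + (1 - 1 / (N : ℂ)) * Complex.exp (φ * Complex.I))]

/-- The one-step target probability: the squared modulus of the first component of `A(φ)·v`. -/
noncomputable def targetProb (N : ℕ) (φ : ℝ) (v : Fin 2 → ℂ) : ℝ :=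
  ‖(groverA N φ).mulVec v 0‖ ^ 2

/-- The inverse cotangent with range `(0, π)`. -/
noncomputable def arccot (x : ℝ) : ℝ := Real.pi / 2 - Real.arctan x

/-!
Write `s = sin α`, `c = cos α`, `r = √(N - 1)` and `z = e^{iφ}`. Then
`N (A(φ)v)₀ = -N s - (z - 1)(s z + N s + r c)`, and expanding the modulus gives
`N² (s² - P(φ)) = 2 r (1 - cos φ) (K + 2 s c (1 - cos φ))`
with `K = r (s² - c²) - (N + 2) s c`, while `P(0) = s²`.
Since `K = -(r cos 2α + (N + 2)/2 · sin 2α)`, the hypothesis on `α` says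
`cot 2α ≤ -(N + 2)/(2r)` with `0 < 2α < π`, i.e. `K ≥ 0`; and `s c ≥ 0`.
-/

lemma arccot_pos (x : ℝ) : 0 < arccot x := by
  unfold arccot
  linarith [arctan_lt_pi_div_two x]

lemma cos_le_mul_sin_of_arccot_le {x θ : ℝ} (h : arccot x ≤ θ) (hθ : θ < π) :
    Real.cos θ ≤ x * Real.sin θ := by
  have hθ_pos : 0 < θ := (arccot_pos x).trans_le h
  unfold arccot at h
  have harctan := arctan_lt_pi_div_two x
  have htan : Real.tan (π / 2 - θ) ≤ x := by
    refine arctan_strictMono.le_iff_le.mp ?_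
    rw [Real.arctan_tan (by linarith) (by linarith)]
    linarith
  rwa [Real.tan_eq_sin_div_cos, Real.sin_pi_div_two_sub, Real.cos_pi_div_two_sub,
    div_le_iff₀ (sin_pos_of_pos_of_lt_pi hθ_pos hθ)] at htan

lemma targetProb_ofReal {N : ℕ} (hN : 1 ≤ N) (φ s c : ℝ) :
    targetProb N φ ![(s : ℂ), (c : ℂ)] =
      s ^ 2 - 2 * √((N : ℝ) - 1) * (1 - Real.cos φ) *
        (√((N : ℝ) - 1) * (s ^ 2 - c ^ 2) - (N + 2) * s * c + 2 * s * c * (1 - Real.cos φ)) /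
          (N : ℝ) ^ 2 := by
  set r := √((N : ℝ) - 1)
  have hN' : (1 : ℝ) ≤ N := by exact_mod_cast hN
  have hr : r ^ 2 = N - 1 := sq_sqrt (by linarith)
  have hNC : (N : ℂ) ≠ 0 := by exact_mod_cast (by omega : N ≠ 0)
  have hw : (groverA N φ).mulVec ![(s : ℂ), (c : ℂ)] 0 =
      ((-(s / N) * (2 * Real.cos φ ^ 2 - 1) + (s / N - s - r * c / N) * Real.cos φ + r * c / N :
          ℝ) : ℂ)
        + ((Real.sin φ * (-(2 * s * Real.cos φ / N) + s / N - s - r * c / N) : ℝ) : ℂ)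
          * Complex.I := by
    simp only [groverA, Matrix.mulVec, dotProduct, Fin.sum_univ_two, Complex.exp_mul_I,
      Matrix.of_apply, Matrix.cons_val', Matrix.cons_val_zero, Matrix.cons_val_one,
      Matrix.empty_val', Matrix.cons_val_fin_one]
    push_cast
    field_simp
    linear_combination (-(s : ℂ) * Complex.sin φ ^ 2) * Complex.I_sq +
      s * Complex.sin_sq_add_cos_sq φ
  rw [targetProb, hw, Complex.sq_norm, Complex.normSq_add_mul_I, mul_pow, Real.sin_sq]
  field_simp
  linear_combination 2 * s ^ 2 * (1 - Real.cos φ) * hr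

theorem stmt_13 (N : ℕ) (hN : 2 ≤ N) (α : ℝ)
    (hα : (1 / 2) * arccot ((-(N : ℝ) - 2) / (2 * Real.sqrt ((N : ℝ) - 1))) ≤ α ∧
      α < Real.pi / 2)
    (v : Fin 2 → ℂ) (hv : v = ![(Real.sin α : ℂ), (Real.cos α : ℂ)]) :
    ∀ φ ∈ Set.Icc (-Real.pi) Real.pi,
      targetProb N φ v ≤ targetProb N 0 v := by
  intro φ _
  obtain ⟨hα_lo, hα_hi⟩ := hα
  subst hv
  set r := √((N : ℝ) - 1)
  have hr : 0 < r := sqrt_pos.2 (by rw [sub_pos]; exact_mod_cast hN)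
  have hα_pos : 0 < α := by linarith [arccot_pos ((-N - 2) / (2 * r))]
  have hs : 0 ≤ Real.sin α := sin_nonneg_of_nonneg_of_le_pi hα_pos.le (by linarith [pi_pos])
  have hc : 0 ≤ Real.cos α := cos_nonneg_of_mem_Icc ⟨by linarith, hα_hi.le⟩
  have hcot := cos_le_mul_sin_of_arccot_le (by linarith : arccot _ ≤ 2 * α) (by linarith)
  have hK :
      0 ≤ r * (Real.sin α ^ 2 - Real.cos α ^ 2) - (N + 2) * Real.sin α * Real.cos α := by
    rw [Real.sin_two_mul, Real.cos_two_mul, div_mul_eq_mul_div,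
      le_div_iff₀ (by positivity)] at hcot
    linear_combination hcot / 2 - r * Real.sin_sq_add_cos_sq α
  have h1 : 0 ≤ 1 - Real.cos φ := sub_nonneg.2 (Real.cos_le_one φ)
  have hsc : 0 ≤ 2 * Real.sin α * Real.cos α * (1 - Real.cos φ) :=
    mul_nonneg (mul_nonneg (mul_nonneg zero_le_two hs) hc) h1
  rw [targetProb_ofReal (by omega), targetProb_ofReal (by omega), Real.cos_zero, sub_self,
    mul_zero, zero_mul, zero_div, sub_zero]
  exact sub_le_self _
    (div_nonneg (mul_nonneg (by positivity) (add_nonneg hK hsc)) (by positivity))
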